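/- For unit lengths, comparing two solutions by cumulative vectors d is equivalent to the existence of an order-preserving injection: for finsets x, y ⊆ E with |x| = |y|, d_i(x) ≤ d_i(y) for all i if and only if there is a bijection φ : x → y with o(e) ≤ o(φ(e)) for every e ∈ x. -/
import Mathlib


/-- Cumulative category count. -/
def dcount {E : Type*} [DecidableEq E] {K : ℕ} (o : E → Fin K)
    (x : Finset E) (i : Fin K) : ℕ :=
  (x.filter (fun e => i ≤ o e)).card

theorem stmt_17 {E : Type*} [Fintype E] [DecidableEq E] {K : ℕ}
    (o : E → Fin K) (x y : Finset E) (hcard : x.card = y.card) :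
    (∀ i, dcount o x i ≤ dcount o y i) ↔
      ∃ φ : {e // e ∈ x} → {e // e ∈ y},
        Function.Bijective φ ∧ ∀ e : {e // e ∈ x}, o e.1 ≤ o (φ e).1 := by
  classical
  constructor
  · intro h
    set t : {e // e ∈ x} → Finset E := fun a => y.filter (fun b => o a.1 ≤ o b) with ht
    have hall : ∀ s : Finset {e // e ∈ x}, s.card ≤ (s.biUnion t).card := by
      intro s
      rcases s.eq_empty_or_nonempty with rfl | hs
      · simp
      · have hne : (s.image (fun a => o a.1)).Nonempty := hs.image _
        set i := (s.image (fun a => o a.1)).min' hne with hi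
        obtain ⟨a₀, ha₀s, ha₀⟩ := Finset.mem_image.mp ((s.image (fun a => o a.1)).min'_mem hne)
        have h1 : s.card ≤ (x.filter (fun e => i ≤ o e)).card := by
          have : s.image Subtype.val ⊆ x.filter (fun e => i ≤ o e) := by
            intro b hb
            obtain ⟨a, has, rfl⟩ := Finset.mem_image.mp hb
            exact Finset.mem_filter.mpr ⟨a.2,
              Finset.min'_le _ _ (Finset.mem_image_of_mem _ has)⟩
          calc s.card = (s.image Subtype.val).card :=
                (Finset.card_image_of_injective _ Subtype.val_injective).symm
            _ ≤ _ := Finset.card_le_card this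
        have h2 : (y.filter (fun e => i ≤ o e)).card ≤ (s.biUnion t).card := by
          apply Finset.card_le_card
          intro b hb
          obtain ⟨hby, hib⟩ := Finset.mem_filter.mp hb
          exact Finset.mem_biUnion.mpr ⟨a₀, ha₀s,
            Finset.mem_filter.mpr ⟨hby, ha₀ ▸ hib⟩⟩
        exact h1.trans ((h i).trans h2)
    obtain ⟨f, hfinj, hft⟩ := (Finset.all_card_le_biUnion_card_iff_exists_injective t).mp hall
    refine ⟨fun a => ⟨f a, (Finset.mem_filter.mp (hft a)).1⟩, ?_, ?_⟩
    · rw [Fintype.bijective_iff_injective_and_card]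
      constructor
      · intro a b hab
        exact hfinj (congrArg Subtype.val hab)
      · simp [hcard]
    · intro a
      exact (Finset.mem_filter.mp (hft a)).2
  · rintro ⟨φ, ⟨hinj, _⟩, hmono⟩ i
    unfold dcount
    apply Finset.card_le_card_of_injOn
      (fun a => if h : a ∈ x then (φ ⟨a, h⟩).1 else a)
    · intro a ha
      obtain ⟨hax, hia⟩ := Finset.mem_filter.mp ha
      simp only [hax, dif_pos]
      exact Finset.mem_filter.mpr ⟨(φ ⟨a, hax⟩).2, le_trans hia (hmono ⟨a, hax⟩)⟩
    · intro a ha b hb hab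
      have hax := (Finset.mem_filter.mp ha).1
      have hbx := (Finset.mem_filter.mp hb).1
      simp only [hax, hbx, dif_pos] at hab
      have := hinj (Subtype.val_injective hab)
      exact congrArg Subtype.val this
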